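/- In the where-security definition, if σ(e) ⪯ σ(x) for every declassification x := declass(e) occurring in P (i.e., no declassification is a real downgrade), then where-security of P is equivalent to noninterference of P. -/

import Mathlib

/-! Deep embedding of the paper's deterministic imperative language with I/O
channels and a declassification primitive. -/

inductive BOp | add | sub | mul
deriving DecidableEq

def BOp.apply : BOp → ℕ → ℕ → ℕ
  | .add => (· + ·)
  | .sub => (· - ·)
  | .mul => (· * ·)

/-- Expressions: e ::= v | x | e ⊕ e'. -/
inductive Expr (Var : Type) where
  | const : ℕ → Expr Var
  | var : Var → Expr Var
  | op : BOp → Expr Var → Expr Var → Expr Var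
deriving DecidableEq

def Expr.eval {Var : Type} (μ : Var → ℕ) : Expr Var → ℕ
  | .const v => v
  | .var x => μ x
  | .op o a b => o.apply (a.eval μ) (b.eval μ)

/-- Security level of an expression: join of the levels of its variables. -/
def Expr.lev {Var D : Type} [Lattice D] [OrderBot D] (σ : Var → D) : Expr Var → D
  | .const _ => ⊥
  | .var x => σ x
  | .op _ a b => a.lev σ ⊔ b.lev σ

/-- Commands of the language. -/
inductive Cmd (Var Chan : Type) where
  | skip
  | assign (x : Var) (e : Expr Var)
  | declass (x : Var) (e : Expr Var)
  | ite (e : Expr Var) (c₁ c₂ : Cmd Var Chan)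
  | while (e : Expr Var) (c : Cmd Var Chan)
  | seq (c₁ c₂ : Cmd Var Chan)
  | input (x : Var) (i : Chan)
  | output (e : Expr Var) (i : Chan)
deriving DecidableEq

/-- Configurations (μ, 𝓘, 𝓞, p, q, C): store, input channels, output channels,
input indices, output indices and the command to be executed. -/
structure Config (Var Chan : Type) where
  μ : Var → ℕ
  I : Chan → ℕ → ℕ
  O : Chan → ℕ → ℕ
  p : Chan → ℕ
  q : Chan → ℕ
  C : Cmd Var Chan

/-- Labeled small-step semantics.  Ordinary steps are labeled `none`; a real
declassification (σ(x) ≺ σ(e), i.e. ¬ σ(e) ⪯ σ(x)) is labeled `some v` with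
`v` the released value of the declassified expression. -/
inductive LStep {Var Chan D : Type} [DecidableEq Var] [DecidableEq Chan]
    [Lattice D] [OrderBot D] (σ : Var → D) :
    Config Var Chan → Option ℕ → Config Var Chan → Prop where
  | assign : ∀ μ I O p q x e,
      LStep σ ⟨μ, I, O, p, q, .assign x e⟩ none
              ⟨Function.update μ x (e.eval μ), I, O, p, q, .skip⟩
  | declassLow : ∀ μ I O p q x e, Expr.lev σ e ≤ σ x →
      LStep σ ⟨μ, I, O, p, q, .declass x e⟩ none
              ⟨Function.update μ x (e.eval μ), I, O, p, q, .skip⟩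
  | declassHigh : ∀ μ I O p q x e, ¬ Expr.lev σ e ≤ σ x →
      LStep σ ⟨μ, I, O, p, q, .declass x e⟩ (some (e.eval μ))
              ⟨Function.update μ x (e.eval μ), I, O, p, q, .skip⟩
  | iteTrue : ∀ μ I O p q e c₁ c₂, e.eval μ ≠ 0 →
      LStep σ ⟨μ, I, O, p, q, .ite e c₁ c₂⟩ none ⟨μ, I, O, p, q, c₁⟩
  | iteFalse : ∀ μ I O p q e c₁ c₂, e.eval μ = 0 →
      LStep σ ⟨μ, I, O, p, q, .ite e c₁ c₂⟩ none ⟨μ, I, O, p, q, c₂⟩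
  | whileTrue : ∀ μ I O p q e c, e.eval μ ≠ 0 →
      LStep σ ⟨μ, I, O, p, q, .while e c⟩ none ⟨μ, I, O, p, q, .seq c (.while e c)⟩
  | whileFalse : ∀ μ I O p q e c, e.eval μ = 0 →
      LStep σ ⟨μ, I, O, p, q, .while e c⟩ none ⟨μ, I, O, p, q, .skip⟩
  | seqSkip : ∀ μ I O p q c,
      LStep σ ⟨μ, I, O, p, q, .seq .skip c⟩ none ⟨μ, I, O, p, q, c⟩
  | seqStep : ∀ μ I O p q μ' I' O' p' q' c₁ c₁' c₂ lab,
      LStep σ ⟨μ, I, O, p, q, c₁⟩ lab ⟨μ', I', O', p', q', c₁'⟩ →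
      LStep σ ⟨μ, I, O, p, q, .seq c₁ c₂⟩ lab ⟨μ', I', O', p', q', .seq c₁' c₂⟩
  | inp : ∀ μ I O p q x i,
      LStep σ ⟨μ, I, O, p, q, .input x i⟩ none
              ⟨Function.update μ x (I i (p i)), I, O,
               Function.update p i (p i + 1), q, .skip⟩
  | out : ∀ μ I O p q e i,
      LStep σ ⟨μ, I, O, p, q, .output e i⟩ none
              ⟨μ, I, Function.update O i (Function.update (O i) (q i) (e.eval μ)),
               p, Function.update q i (q i + 1), .skip⟩

/-- Multi-step execution recording, for each real declassification step, the
pre-configuration, the released value and the post-configuration. -/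
inductive DExec {Var Chan D : Type} [DecidableEq Var] [DecidableEq Chan]
    [Lattice D] [OrderBot D] (σ : Var → D) :
    Config Var Chan → List (Config Var Chan × ℕ × Config Var Chan) →
    Config Var Chan → Prop where
  | refl : ∀ c, DExec σ c [] c
  | tau : ∀ c c' ds c'', LStep σ c none c' → DExec σ c' ds c'' → DExec σ c ds c''
  | dstep : ∀ c v c' ds c'', LStep σ c (some v) c' → DExec σ c' ds c'' →
      DExec σ c ((c, v, c') :: ds) c''

/-- Terminal configuration. -/
def Terminal {Var Chan : Type} (c : Config Var Chan) : Prop := c.C = .skip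

/-- ℓ-indistinguishability of stores. -/
def Indist {Var D : Type} [Lattice D] (σ : Var → D) (ℓ : D) (μ μ' : Var → ℕ) : Prop :=
  ∀ x, σ x ≤ ℓ → μ x = μ' x

/-- ℓ-indistinguishability of input channels (low channels agree). -/
def LowIn {Chan D : Type} [Lattice D] (σI : Chan → D) (ℓ : D)
    (I I' : Chan → ℕ → ℕ) : Prop :=
  ∀ i, σI i ≤ ℓ → ∀ k, I i k = I' i k

/-- ℓ-indistinguishability of output channels: low channels have equal current
indices and agree below them. -/
def LowOut {Chan D : Type} [Lattice D] (σO : Chan → D) (ℓ : D)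
    (O O' : Chan → ℕ → ℕ) (q q' : Chan → ℕ) : Prop :=
  ∀ i, σO i ≤ ℓ → q i = q' i ∧ ∀ k < q i, O i k = O' i k

/-- Initial configuration of a program. -/
def init {Var Chan : Type} (μ : Var → ℕ) (I O : Chan → ℕ → ℕ) (P : Cmd Var Chan) :
    Config Var Chan :=
  ⟨μ, I, O, fun _ => 0, fun _ => 0, P⟩

/-- Noninterference: terminating runs from ℓ-indistinguishable initial states end
in ℓ-indistinguishable final stores and output channels. -/
def NI {Var Chan D : Type} [DecidableEq Var] [DecidableEq Chan] [Lattice D] [OrderBot D]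
    (σ : Var → D) (σI σO : Chan → D) (P : Cmd Var Chan) : Prop :=
  ∀ ℓ μ μ' I I' O O' ds ds' cf cf',
    Indist σ ℓ μ μ' → LowIn σI ℓ I I' →
    DExec σ (init μ I O P) ds cf → Terminal cf →
    DExec σ (init μ' I' O' P) ds' cf' → Terminal cf' →
    Indist σ ℓ cf.μ cf'.μ ∧ LowOut σO ℓ cf.O cf'.O cf.q cf'.q

/-- Where-security: for terminating runs from ℓ-indistinguishable initial states,
the two runs perform the same number of declassification steps; each matched pair
of declassification steps preserves store indistinguishability provided the
pre-stores are indistinguishable and the released values agree; and if all the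
pairwise released values agree, the final stores and output channels are
ℓ-indistinguishable. -/
def WhereSec {Var Chan D : Type} [DecidableEq Var] [DecidableEq Chan] [Lattice D] [OrderBot D]
    (σ : Var → D) (σI σO : Chan → D) (P : Cmd Var Chan) : Prop :=
  ∀ ℓ μ μ' I I' O O' ds ds' cf cf',
    Indist σ ℓ μ μ' → LowIn σI ℓ I I' →
    DExec σ (init μ I O P) ds cf → Terminal cf →
    DExec σ (init μ' I' O' P) ds' cf' → Terminal cf' →
    ds.length = ds'.length ∧
    (∀ pr ∈ ds.zip ds',
      Indist σ ℓ pr.1.1.μ pr.2.1.μ → pr.1.2.1 = pr.2.2.1 →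
      Indist σ ℓ pr.1.2.2.μ pr.2.2.2.μ) ∧
    ((∀ pr ∈ ds.zip ds', pr.1.2.1 = pr.2.2.1) →
      Indist σ ℓ cf.μ cf'.μ ∧ LowOut σO ℓ cf.O cf'.O cf.q cf'.q)

/-- A command contains no declassification. -/
def Cmd.declassFree {Var Chan : Type} : Cmd Var Chan → Prop
  | .declass _ _ => False
  | .ite _ a b => a.declassFree ∧ b.declassFree
  | .while _ a => a.declassFree
  | .seq a b => a.declassFree ∧ b.declassFree
  | _ => True

/-- Every declassification `x := declass(e)` occurring in the command satisfies
σ(e) ⪯ σ(x), i.e. no declassification is a real downgrade. -/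
def Cmd.declassLow {Var Chan D : Type} [Lattice D] [OrderBot D] (σ : Var → D) :
    Cmd Var Chan → Prop
  | .declass x e => Expr.lev σ e ≤ σ x
  | .ite _ a b => a.declassLow σ ∧ b.declassLow σ
  | .while _ a => a.declassLow σ
  | .seq a b => a.declassLow σ ∧ b.declassLow σ
  | _ => True

/-! A program all of whose declassifications satisfy σ(e) ⪯ σ(x) never takes a labeled step:
every `declass` it reaches is executed by the `declassLow` rule, and unlabeled steps keep the
program inside this fragment. So each of its runs records no declassifications, the first two
clauses of where-security hold vacuously, the premise of the third holds trivially, and what is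
left is exactly noninterference. -/

section DeclassLow

variable {Var Chan D : Type} [DecidableEq Var] [DecidableEq Chan] [Lattice D] [OrderBot D]
  {σ : Var → D}

theorem LStep.declassLow_and_eq_none {c c' : Config Var Chan} {lab : Option ℕ}
    (h : LStep σ c lab c') (hc : c.C.declassLow σ) : c'.C.declassLow σ ∧ lab = none := by
  induction h with
  | declassHigh _ _ _ _ _ _ _ hhigh => exact absurd hc hhigh
  | iteTrue => exact ⟨hc.1, rfl⟩
  | iteFalse => exact ⟨hc.2, rfl⟩
  | whileTrue => exact ⟨⟨hc, hc⟩, rfl⟩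
  | seqSkip => exact ⟨hc.2, rfl⟩
  | seqStep _ _ _ _ _ _ _ _ _ _ _ _ _ _ _ ih =>
    obtain ⟨hc₁', hlab⟩ := ih hc.1
    exact ⟨⟨hc₁', hc.2⟩, hlab⟩
  | _ => exact ⟨trivial, rfl⟩

theorem DExec.eq_nil_of_declassLow {c cf : Config Var Chan}
    {ds : List (Config Var Chan × ℕ × Config Var Chan)}
    (h : DExec σ c ds cf) (hc : c.C.declassLow σ) : ds = [] := by
  induction h with
  | refl => rfl
  | tau _ _ _ _ hstep _ ih => exact ih (hstep.declassLow_and_eq_none hc).1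
  | dstep _ _ _ _ _ hstep _ _ => nomatch (hstep.declassLow_and_eq_none hc).2

end DeclassLow

/-- If no declassification in P is a real downgrade, where-security of P is
equivalent to noninterference of P. -/
theorem whereSec_iff_NI_of_declassLow {Var Chan D : Type} [DecidableEq Var]
    [DecidableEq Chan] [Lattice D] [OrderBot D]
    (σ : Var → D) (σI σO : Chan → D) (P : Cmd Var Chan)
    (hlow : P.declassLow σ) :
    WhereSec σ σI σO P ↔ NI σ σI σO P := by
  constructor
  · intro hws ℓ μ μ' I I' O O' ds ds' cf cf' hμ hI hrun hcf hrun' hcf'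
    obtain rfl := hrun.eq_nil_of_declassLow hlow
    exact (hws ℓ μ μ' I I' O O' [] ds' cf cf' hμ hI hrun hcf hrun' hcf').2.2 (by simp)
  · intro hni ℓ μ μ' I I' O O' ds ds' cf cf' hμ hI hrun hcf hrun' hcf'
    obtain rfl := hrun.eq_nil_of_declassLow hlow
    obtain rfl := hrun'.eq_nil_of_declassLow hlow
    exact ⟨rfl, by simp, fun _ => hni ℓ μ μ' I I' O O' [] [] cf cf' hμ hI hrun hcf hrun' hcf'⟩
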